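/- Two d-minimal triangles S and T are G-equivalent if and only if their weight multisets are equal: W(S) = W(T). -/

import Mathlib

noncomputable section

/-- The lattice `(1/d)ℤ × (1/d)ℤ` inside `ℝ × ℝ`. -/
def Ld (d : ℕ) : Set (ℝ × ℝ) :=
  {p | ∃ a b : ℤ, p = ((a : ℝ) / d, (b : ℝ) / d)}

/-- A `d`-minimal triangle: vertices in `L_d`, not collinear, and the closed triangle
meets `L_d` exactly in its three vertices. -/
def IsMinimalTriangle (d : ℕ) (p q r : ℝ × ℝ) : Prop :=
  p ∈ Ld d ∧ q ∈ Ld d ∧ r ∈ Ld d ∧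
    ¬ Collinear ℝ ({p, q, r} : Set (ℝ × ℝ)) ∧
    convexHull ℝ ({p, q, r} : Set (ℝ × ℝ)) ∩ Ld d = {p, q, r}

/-- An element of `G = GL₂(ℤ) ⋉ ℤ²`: an integer matrix `[[a,b],[c,e]]` of determinant
`±1` together with an integer translation vector `(v1, v2)`. -/
structure GMap where
  a : ℤ
  b : ℤ
  c : ℤ
  e : ℤ
  v1 : ℤ
  v2 : ℤ
  unimod : a * e - b * c = 1 ∨ a * e - b * c = -1

/-- The affine action `x ↦ Ux + v` of a `GMap` on `ℝ²`. -/
def GMap.app (g : GMap) (p : ℝ × ℝ) : ℝ × ℝ :=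
  ((g.a : ℝ) * p.1 + (g.b : ℝ) * p.2 + (g.v1 : ℝ),
   (g.c : ℝ) * p.1 + (g.e : ℝ) * p.2 + (g.v2 : ℝ))

/-- A `d`-minimal segment: endpoints in `L_d`, distinct, and the closed segment meets
`L_d` exactly in its two endpoints. -/
def IsMinimalSegment (d : ℕ) (p q : ℝ × ℝ) : Prop :=
  p ∈ Ld d ∧ q ∈ Ld d ∧ p ≠ q ∧ segment ℝ p q ∩ Ld d = {p, q}

/-- The point of `L_d` with integer numerator data `p : ℤ × ℤ`. -/
def pt (d : ℕ) (p : ℤ × ℤ) : ℝ × ℝ := ((p.1 : ℝ) / d, (p.2 : ℝ) / d)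

/-- Counterclockwise orientation of the ordered triple of numerator data. -/
def ccwZ (p q r : ℤ × ℤ) : Prop :=
  0 < (q.1 - p.1) * (r.2 - p.2) - (q.2 - p.2) * (r.1 - p.1)

/-- Weight (mod `d`) of the oriented minimal segment from `(w/d, x/d)` to `(y/d, z/d)`,
given by numerator data `(w,x)` and `(y,z)`. -/
def segWeight (d : ℕ) (p q : ℤ × ℤ) : ZMod d :=
  ((p.1 * q.2 - p.2 * q.1 : ℤ) : ZMod d)

/-- The multiset of weights of the three edges `p→q`, `q→r`, `r→p` of a triangle
given by numerator data. -/
def triWeight (d : ℕ) (p q r : ℤ × ℤ) : Multiset (ZMod d) :=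
  {segWeight d p q, segWeight d q r, segWeight d r p}

/-! Clearing denominators, a `d`-minimal triangle is a lattice triangle `p, q, r` in `ℤ²`, on which
`G` acts by `x ↦ U x + d v`. Minimality forces `det (q - p, r - p) = 1`: otherwise some lattice
point, reduced modulo the sublattice spanned by `q - p` and `r - p`, lands in the triangle without
being a vertex. Under `G` the weight `det (x, y) mod d` of an edge is multiplied by `det U`, and an
orientation-reversing map also reverses the counterclockwise order of the edges, so `W` is
invariant. Conversely, for two unimodular triangles whose weights match in order, the linear map
carrying edge vectors to edge vectors, corrected by a translation, lies in `G`; a mismatch in the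
order of the weights is absorbed by relabelling the vertices and by the reflection
`(x, y) ↦ (y, x)`. -/

lemma Multiset.triple_rotate {α : Type*} (a b c : α) : ({a, b, c} : Multiset α) = {b, c, a} :=
  show a ::ₘ b ::ₘ c ::ₘ 0 = b ::ₘ c ::ₘ a ::ₘ 0 by
    rw [Multiset.cons_swap a b, Multiset.cons_swap a c]

lemma Multiset.triple_reverse {α : Type*} (a b c : α) : ({a, b, c} : Multiset α) = {c, b, a} :=
  show a ::ₘ b ::ₘ c ::ₘ 0 = c ::ₘ b ::ₘ a ::ₘ 0 by
    rw [Multiset.cons_swap b c, Multiset.cons_swap a c, Multiset.cons_swap a b]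

lemma Multiset.triple_eq_triple_cases {α : Type*} {a b c x y z : α}
    (h : ({a, b, c} : Multiset α) = {x, y, z}) :
    (a = x ∧ b = y ∧ c = z) ∨ (a = y ∧ b = z ∧ c = x) ∨ (a = z ∧ b = x ∧ c = y) ∨
    (a = x ∧ b = z ∧ c = y) ∨ (a = z ∧ b = y ∧ c = x) ∨ (a = y ∧ b = x ∧ c = z) := by
  have : [a, b, c] ∈ [x, y, z].permutations :=
    List.mem_permutations.mpr (Multiset.coe_eq_coe.mp h)
  simp [List.permutations, List.permutationsAux, List.permutationsAux.rec] at this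
  tauto

lemma smul_add_smul_add_smul_mem_convexHull {𝕜 E : Type*} [Field 𝕜] [LinearOrder 𝕜]
    [IsStrictOrderedRing 𝕜] [AddCommGroup E] [Module 𝕜 E] {x y z : E} {α β γ : 𝕜}
    (hα : 0 ≤ α) (hβ : 0 ≤ β) (hγ : 0 ≤ γ) (h : α + β + γ = 1) :
    α • x + β • y + γ • z ∈ convexHull 𝕜 ({x, y, z} : Set E) := by
  have := (convex_convexHull 𝕜 ({x, y, z} : Set E)).sum_mem (t := Finset.univ)
    (w := ![α, β, γ]) (z := ![x, y, z]) (by intro i _; fin_cases i <;> simpa)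
    (by simp [Fin.sum_univ_three, h])
    (by intro i _; fin_cases i <;> apply subset_convexHull <;> simp)
  simpa [Fin.sum_univ_three, add_assoc] using this

section IntegerPlane

variable {u v : ℤ × ℤ} {D : ℤ}

lemma eq_of_smul_add_smul_eq (huv : u.1 * v.2 - u.2 * v.1 ≠ 0) {a b a' b' : ℤ}
    (h : a • u + b • v = a' • u + b' • v) : a = a' ∧ b = b' := by
  have h1 := congrArg Prod.fst h
  have h2 := congrArg Prod.snd h
  simp only [Prod.fst_add, Prod.snd_add, Prod.smul_fst, Prod.smul_snd, smul_eq_mul] at h1 h2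
  constructor
  · exact mul_right_cancel₀ huv (by linear_combination v.2 * h1 - v.1 * h2)
  · exact mul_right_cancel₀ huv (by linear_combination u.1 * h2 - u.2 * h1)

lemma exists_lattice_point_in_parallelogram (hD : u.1 * v.2 - u.2 * v.1 = D) (h2 : 2 ≤ D) :
    ∃ (a b : ℤ) (z : ℤ × ℤ), 0 ≤ a ∧ a < D ∧ 0 ≤ b ∧ b < D ∧ (a ≠ 0 ∨ b ≠ 0) ∧
      D • z = a • u + b • v := by
  -- If `D` divided both Cramer coefficients of `(1,0)` and `(0,1)`, it would divide every
  -- entry of `u` and `v`, so `D * D ∣ D`.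
  obtain ⟨w, hw⟩ : ∃ w : ℤ × ℤ,
      ¬ (D ∣ w.1 * v.2 - w.2 * v.1 ∧ D ∣ u.1 * w.2 - u.2 * w.1) := by
    by_contra! hall
    obtain ⟨hv₂, hu₂⟩ := hall (1, 0)
    obtain ⟨hv₁, hu₁⟩ := hall (0, 1)
    simp only [one_mul, zero_mul, sub_zero, zero_sub, mul_one, mul_zero, dvd_neg] at hu₁ hu₂ hv₁ hv₂
    have hDD : D * D ∣ u.1 * v.2 - u.2 * v.1 :=
      dvd_sub (mul_dvd_mul hu₁ hv₂) (mul_dvd_mul hu₂ hv₁)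
    rw [hD] at hDD
    nlinarith [Int.le_of_dvd (by omega) hDD]
  set A := w.1 * v.2 - w.2 * v.1
  set B := u.1 * w.2 - u.2 * w.1
  refine ⟨A % D, B % D, w - (A / D) • u - (B / D) • v, Int.emod_nonneg A (by omega),
    Int.emod_lt_of_pos A (by omega), Int.emod_nonneg B (by omega),
    Int.emod_lt_of_pos B (by omega), ?_, ?_⟩
  · by_contra! h0
    exact hw ⟨Int.dvd_of_emod_eq_zero h0.1, Int.dvd_of_emod_eq_zero h0.2⟩
  · rw [Int.emod_def, Int.emod_def]
    ext <;> simp only [Prod.smul_fst, Prod.smul_snd, Prod.fst_add, Prod.snd_add, Prod.fst_sub,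
      Prod.snd_sub, smul_eq_mul, A, B, ← hD] <;> ring

lemma exists_lattice_point_in_triangle (hD : u.1 * v.2 - u.2 * v.1 = D) (h2 : 2 ≤ D) :
    ∃ (a b : ℤ) (z : ℤ × ℤ), 0 ≤ a ∧ 0 ≤ b ∧ a + b ≤ D ∧ 0 < a + b ∧ a < D ∧ b < D ∧
      D • z = a • u + b • v := by
  obtain ⟨a, b, z, ha, haD, hb, hbD, hab, hz⟩ := exists_lattice_point_in_parallelogram hD h2
  by_cases hle : a + b ≤ D
  · exact ⟨a, b, z, ha, hb, hle, by omega, haD, hbD, hz⟩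
  -- Otherwise reflect through the centre of the parallelogram.
  · refine ⟨D - a, D - b, u + v - z, by omega, by omega, by omega, by omega, by omega, by omega, ?_⟩
    rw [smul_sub, hz, smul_add]
    module

end IntegerPlane

def triDet (p q r : ℤ × ℤ) : ℤ :=
  (q.1 - p.1) * (r.2 - p.2) - (q.2 - p.2) * (r.1 - p.1)

lemma triDet_rotate (p q r : ℤ × ℤ) : triDet p q r = triDet q r p := by
  simp only [triDet]; ring

lemma triDet_anticomm (p q r : ℤ × ℤ) : -triDet p q r = triDet p r q := by
  simp only [triDet]; ring

lemma triDet_swap (p q r : ℤ × ℤ) : triDet p.swap r.swap q.swap = triDet p q r := by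
  simp only [triDet, Prod.fst_swap, Prod.snd_swap]; ring

lemma segWeight_anticomm (d : ℕ) (x y : ℤ × ℤ) : -segWeight d x y = segWeight d y x := by
  simp only [segWeight]; push_cast; ring

lemma segWeight_swap (d : ℕ) (x y : ℤ × ℤ) : segWeight d x.swap y.swap = segWeight d y x := by
  simp only [segWeight, Prod.fst_swap, Prod.snd_swap]; push_cast; ring

lemma triWeight_rotate (d : ℕ) (p q r : ℤ × ℤ) : triWeight d p q r = triWeight d q r p :=
  Multiset.triple_rotate _ _ _

lemma pt_injective {d : ℕ} (hd : d ≠ 0) : Function.Injective (pt d) := by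
  intro x y h
  have hd' : (d : ℝ) ≠ 0 := Nat.cast_ne_zero.mpr hd
  simp only [pt, Prod.mk.injEq, div_left_inj' hd', Int.cast_inj] at h
  exact Prod.ext h.1 h.2

lemma Ld_eq_range (d : ℕ) : Ld d = Set.range (pt d) := by
  ext x
  exact ⟨fun ⟨a, b, h⟩ => ⟨(a, b), h.symm⟩, fun ⟨n, h⟩ => ⟨n.1, n.2, h.symm⟩⟩

namespace GMap

def det (g : GMap) : ℤ := g.a * g.e - g.b * g.c

lemma det_mul_self (g : GMap) : g.det * g.det = 1 := by
  rcases g.unimod with h | h <;> simp [det, h]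

def appNum (g : GMap) (d : ℕ) (x : ℤ × ℤ) : ℤ × ℤ :=
  (g.a * x.1 + g.b * x.2 + d * g.v1, g.c * x.1 + g.e * x.2 + d * g.v2)

lemma app_pt (g : GMap) {d : ℕ} (hd : d ≠ 0) (x : ℤ × ℤ) :
    g.app (pt d x) = pt d (g.appNum d x) := by
  have hd' : (d : ℝ) ≠ 0 := Nat.cast_ne_zero.mpr hd
  simp only [GMap.app, pt, appNum, Prod.mk.injEq]
  constructor <;> · push_cast; field_simp

def comp (g h : GMap) : GMap where
  a := g.a * h.a + g.b * h.c
  b := g.a * h.b + g.b * h.e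
  c := g.c * h.a + g.e * h.c
  e := g.c * h.b + g.e * h.e
  v1 := g.a * h.v1 + g.b * h.v2 + g.v1
  v2 := g.c * h.v1 + g.e * h.v2 + g.v2
  unimod := by
    have key : (g.a * h.a + g.b * h.c) * (g.c * h.b + g.e * h.e) -
        (g.a * h.b + g.b * h.e) * (g.c * h.a + g.e * h.c) = g.det * h.det := by
      simp only [det]; ring
    rcases g.unimod with h1 | h1 <;> rcases h.unimod with h2 | h2 <;>
      simp [key, det, h1, h2]

lemma appNum_comp (g h : GMap) (d : ℕ) (x : ℤ × ℤ) :
    (g.comp h).appNum d x = g.appNum d (h.appNum d x) := by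
  simp only [comp, appNum, Prod.mk.injEq]
  constructor <;> ring

def inv (g : GMap) : GMap where
  a := g.det * g.e
  b := -(g.det * g.b)
  c := -(g.det * g.c)
  e := g.det * g.a
  v1 := g.det * (g.b * g.v2 - g.e * g.v1)
  v2 := g.det * (g.c * g.v1 - g.a * g.v2)
  unimod := by
    have key : g.det * g.e * (g.det * g.a) - -(g.det * g.b) * -(g.det * g.c) =
        g.det * g.det * g.det := by
      simp only [det]; ring
    rw [key, g.det_mul_self, one_mul]
    exact g.unimod

lemma inv_app_app (g : GMap) (x : ℝ × ℝ) : g.inv.app (g.app x) = x := by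
  have h : (g.det : ℝ) * g.det = 1 := by exact_mod_cast g.det_mul_self
  simp only [inv, GMap.app, det] at h ⊢
  push_cast at h ⊢
  ext
  · linear_combination x.1 * h
  · linear_combination x.2 * h

lemma app_mem_Ld_iff (g : GMap) {d : ℕ} (hd : d ≠ 0) {x : ℝ × ℝ} :
    g.app x ∈ Ld d ↔ x ∈ Ld d := by
  simp only [Ld_eq_range]
  constructor
  · rintro ⟨n, hn⟩
    exact ⟨g.inv.appNum d n, by rw [← app_pt _ hd, hn, inv_app_app]⟩
  · rintro ⟨n, rfl⟩
    exact ⟨g.appNum d n, (app_pt g hd n).symm⟩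

def toAffineMap (g : GMap) : (ℝ × ℝ) →ᵃ[ℝ] ℝ × ℝ where
  toFun := g.app
  linear := ((g.a : ℝ) • LinearMap.fst ℝ ℝ ℝ + (g.b : ℝ) • LinearMap.snd ℝ ℝ ℝ).prod
    ((g.c : ℝ) • LinearMap.fst ℝ ℝ ℝ + (g.e : ℝ) • LinearMap.snd ℝ ℝ ℝ)
  map_vadd' p v := by
    ext <;> simp [GMap.app] <;> ring

lemma image_convexHull (g : GMap) (s : Set (ℝ × ℝ)) :
    g.app '' convexHull ℝ s = convexHull ℝ (g.app '' s) :=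
  g.toAffineMap.image_convexHull s

def swap : GMap := ⟨0, 1, 1, 0, 0, 0, Or.inr (by norm_num)⟩

lemma appNum_swap (d : ℕ) (x : ℤ × ℤ) : swap.appNum d x = x.swap := by
  simp [swap, appNum, Prod.swap]

lemma triDet_appNum (g : GMap) (d : ℕ) (p q r : ℤ × ℤ) :
    triDet (g.appNum d p) (g.appNum d q) (g.appNum d r) = g.det * triDet p q r := by
  simp only [triDet, appNum, det]; ring

lemma segWeight_appNum (g : GMap) (d : ℕ) (x y : ℤ × ℤ) :
    segWeight d (g.appNum d x) (g.appNum d y) = g.det * segWeight d x y := by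
  have key : (g.appNum d x).1 * (g.appNum d y).2 - (g.appNum d x).2 * (g.appNum d y).1 =
      g.det * (x.1 * y.2 - x.2 * y.1) + d * ((g.a * x.1 + g.b * x.2) * g.v2 -
        (g.c * x.1 + g.e * x.2) * g.v1 + g.v1 * (g.c * y.1 + g.e * y.2) -
          g.v2 * (g.a * y.1 + g.b * y.2)) := by
    simp only [appNum, det]; ring
  simp [segWeight, key]

lemma image_convexHull_eq_iff (g : GMap) {d : ℕ} (hd : d ≠ 0) {V V' : Set (ℤ × ℤ)}
    (hV : convexHull ℝ (pt d '' V) ∩ Ld d = pt d '' V)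
    (hV' : convexHull ℝ (pt d '' V') ∩ Ld d = pt d '' V') :
    g.app '' convexHull ℝ (pt d '' V) = convexHull ℝ (pt d '' V') ↔ g.appNum d '' V = V' := by
  have happ : g.app ∘ pt d = pt d ∘ g.appNum d := funext (g.app_pt hd)
  have hpre : g.app ⁻¹' Ld d = Ld d := Set.ext fun _ => g.app_mem_Ld_iff hd
  constructor
  · intro h
    apply (pt_injective hd).image_injective
    rw [← Set.image_comp, ← happ, Set.image_comp, ← hV, ← hV', ← h,
      ← Set.image_inter_preimage, hpre]
  · intro h
    rw [g.image_convexHull, ← Set.image_comp, happ, Set.image_comp, h]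

end GMap

lemma triDet_eq_one_of_minimal {d : ℕ} (hd : d ≠ 0) {p q r : ℤ × ℤ}
    (hmin : convexHull ℝ {pt d p, pt d q, pt d r} ∩ Ld d = {pt d p, pt d q, pt d r})
    (hccw : ccwZ p q r) : triDet p q r = 1 := by
  set D := triDet p q r with hD
  have hDpos : 0 < D := hccw
  by_contra hne
  obtain ⟨a, b, z, ha, hb, habD, hab, haD, hbD, hz⟩ :=
    exists_lattice_point_in_triangle (u := q - p) (v := r - p) hD.symm (by omega)
  have hDR : (0 : ℝ) < D := by exact_mod_cast hDpos
  have hcombo : pt d (p + z) = ((D - a - b : ℤ) / D : ℝ) • pt d p + ((a : ℝ) / D) • pt d q +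
      ((b : ℝ) / D) • pt d r := by
    have h1 : (D : ℝ) * z.1 = a * (q.1 - p.1) + b * (r.1 - p.1) := by
      exact_mod_cast congrArg Prod.fst hz
    have h2 : (D : ℝ) * z.2 = a * (q.2 - p.2) + b * (r.2 - p.2) := by
      exact_mod_cast congrArg Prod.snd hz
    have hdR : (d : ℝ) ≠ 0 := Nat.cast_ne_zero.mpr hd
    ext <;> simp only [pt, Prod.smul_fst, Prod.smul_snd, Prod.fst_add, Prod.snd_add,
      smul_eq_mul] <;> field_simp <;> push_cast
    · linear_combination h1
    · linear_combination h2
  have hmem : pt d (p + z) ∈ ({pt d p, pt d q, pt d r} : Set (ℝ × ℝ)) := by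
    rw [← hmin]
    refine ⟨hcombo ▸ smul_add_smul_add_smul_mem_convexHull ?_ ?_ ?_ ?_, _, _, rfl⟩
    · exact div_nonneg (by exact_mod_cast (by omega : (0 : ℤ) ≤ D - a - b)) hDR.le
    · exact div_nonneg (by exact_mod_cast ha) hDR.le
    · exact div_nonneg (by exact_mod_cast hb) hDR.le
    · field_simp; push_cast; ring
  have huv : (q - p).1 * (r - p).2 - (q - p).2 * (r - p).1 ≠ 0 := hDpos.ne'
  simp only [Set.mem_insert_iff, Set.mem_singleton_iff, (pt_injective hd).eq_iff] at hmem
  rcases hmem with h | h | h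
  · have := eq_of_smul_add_smul_eq huv (a' := 0) (b' := 0)
      (by rw [← hz, show z = 0 by simpa using h]; simp)
    omega
  · have := eq_of_smul_add_smul_eq huv (a' := D) (b' := 0)
      (by rw [← hz, show z = q - p by rw [← h]; abel]; simp)
    omega
  · have := eq_of_smul_add_smul_eq huv (a' := 0) (b' := D)
      (by rw [← hz, show z = r - p by rw [← h]; abel]; simp)
    omega

section Weights

variable {d : ℕ} {p q r p' q' r' : ℤ × ℤ}

lemma triWeight_eq_of_vertexSet_eq (hccw : ccwZ p q r) (hccw' : ccwZ p' q' r')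
    (h : ({p, q, r} : Set (ℤ × ℤ)) = {p', q', r'}) :
    triWeight d p q r = triWeight d p' q' r' := by
  have mem : ∀ x ∈ ({p, q, r} : Set (ℤ × ℤ)), x = p' ∨ x = q' ∨ x = r' := by
    intro x hx; rwa [h] at hx
  -- Of the 27 assignments, only the three rotations are neither degenerate nor clockwise.
  obtain (rfl | rfl | rfl) := mem p (by simp) <;> obtain (rfl | rfl | rfl) := mem q (by simp) <;>
    obtain (rfl | rfl | rfl) := mem r (by simp) <;>
    first
    | rfl
    | exact triWeight_rotate ..
    | exact (triWeight_rotate ..).symm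
    | (exfalso; unfold ccwZ at hccw hccw'; nlinarith)

lemma triWeight_eq_of_image_eq (g : GMap) (hccw : ccwZ p q r) (hccw' : ccwZ p' q' r')
    (h : g.appNum d '' {p, q, r} = {p', q', r'}) :
    triWeight d p q r = triWeight d p' q' r' := by
  simp only [Set.image_insert_eq, Set.image_singleton] at h
  rcases g.unimod with hg | hg <;> change g.det = _ at hg
  · have hccwg : ccwZ (g.appNum d p) (g.appNum d q) (g.appNum d r) := by
      change 0 < triDet _ _ _
      rwa [GMap.triDet_appNum, hg, one_mul]
    rw [← triWeight_eq_of_vertexSet_eq hccwg hccw' h]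
    simp [triWeight, GMap.segWeight_appNum, hg]
  -- An orientation-reversing `g` maps the counterclockwise `p, q, r` to the counterclockwise
  -- `g p, g r, g q`, and reversing the edges negates each weight a second time.
  · have hccwg : ccwZ (g.appNum d p) (g.appNum d r) (g.appNum d q) := by
      change 0 < triDet _ _ _
      rwa [GMap.triDet_appNum, hg, ← triDet_anticomm, neg_one_mul, neg_neg]
    rw [← triWeight_eq_of_vertexSet_eq hccwg hccw' (by rw [← h, Set.pair_comm])]
    simp only [triWeight, GMap.segWeight_appNum, hg, Int.cast_neg, Int.cast_one, neg_one_mul,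
      segWeight_anticomm]
    exact Multiset.triple_reverse _ _ _

lemma exists_appNum_eq_of_segWeight_eq (hS : triDet p q r = 1) (hT : triDet p' q' r' = 1)
    (hpq : segWeight d p q = segWeight d p' q') (hrp : segWeight d r p = segWeight d r' p') :
    ∃ g : GMap, g.appNum d p = p' ∧ g.appNum d q = q' ∧ g.appNum d r = r' := by
  obtain ⟨k₁, hk₁⟩ := (ZMod.intCast_eq_intCast_iff_dvd_sub _ _ _).mp hrp
  obtain ⟨k₂, hk₂⟩ := (ZMod.intCast_eq_intCast_iff_dvd_sub _ _ _).mp hpq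
  obtain ⟨e₁, rfl⟩ : ∃ e, q = p + e := ⟨q - p, by abel⟩
  obtain ⟨e₂, rfl⟩ : ∃ e, r = p + e := ⟨r - p, by abel⟩
  obtain ⟨f₁, rfl⟩ : ∃ f, q' = p' + f := ⟨q' - p', by abel⟩
  obtain ⟨f₂, rfl⟩ : ∃ f, r' = p' + f := ⟨r' - p', by abel⟩
  simp only [triDet, Prod.fst_add, Prod.snd_add, add_sub_cancel_left] at hS hT hk₁ hk₂
  -- The linear part sends `e₁, e₂` to `f₁, f₂`; the weight congruences say exactly that the
  -- remaining translation `p' - U p` lies in `d ℤ²`.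
  refine ⟨⟨e₂.2 * f₁.1 - e₁.2 * f₂.1, e₁.1 * f₂.1 - e₂.1 * f₁.1,
    e₂.2 * f₁.2 - e₁.2 * f₂.2, e₁.1 * f₂.2 - e₂.1 * f₁.2,
    -(k₁ * f₁.1 + k₂ * f₂.1), -(k₁ * f₁.2 + k₂ * f₂.2), Or.inl ?_⟩, ?_, ?_, ?_⟩
  · linear_combination (f₁.1 * f₂.2 - f₁.2 * f₂.1) * hS + hT
  all_goals ext <;> simp only [GMap.appNum, Prod.fst_add, Prod.snd_add]
  · linear_combination f₁.1 * hk₁ + f₂.1 * hk₂ + p'.1 * hT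
  · linear_combination f₁.2 * hk₁ + f₂.2 * hk₂ + p'.2 * hT
  · linear_combination f₁.1 * hk₁ + f₂.1 * hk₂ + p'.1 * hT + f₁.1 * hS
  · linear_combination f₁.2 * hk₁ + f₂.2 * hk₂ + p'.2 * hT + f₁.2 * hS
  · linear_combination f₁.1 * hk₁ + f₂.1 * hk₂ + p'.1 * hT + f₂.1 * hS
  · linear_combination f₁.2 * hk₁ + f₂.2 * hk₂ + p'.2 * hT + f₂.2 * hS

lemma exists_image_eq_of_segWeight_eq (hS : triDet p q r = 1) (hT : triDet p' q' r' = 1)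
    (hpq : segWeight d p q = segWeight d p' q') (hrp : segWeight d r p = segWeight d r' p') :
    ∃ g : GMap, g.appNum d '' {p, q, r} = {p', q', r'} := by
  obtain ⟨g, hp, hq, hr⟩ := exists_appNum_eq_of_segWeight_eq hS hT hpq hrp
  exact ⟨g, by simp [Set.image_insert_eq, hp, hq, hr]⟩

lemma exists_image_eq_of_segWeight_eq_reverse (hS : triDet p q r = 1) (hT : triDet p' q' r' = 1)
    (hrp : segWeight d r p = segWeight d p' q') (hpq : segWeight d p q = segWeight d r' p') :
    ∃ g : GMap, g.appNum d '' {p, q, r} = {p', q', r'} := by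
  obtain ⟨g, hg⟩ := exists_image_eq_of_segWeight_eq (p := p.swap) (q := r.swap) (r := q.swap)
    (by rwa [triDet_swap]) hT (by rwa [segWeight_swap]) (by rwa [segWeight_swap])
  refine ⟨g.comp GMap.swap, ?_⟩
  rw [← hg, Set.pair_comm r.swap]
  simp [Set.image_insert_eq, GMap.appNum_comp, GMap.appNum_swap]

lemma exists_image_eq_of_triWeight_eq (hS : triDet p q r = 1) (hT : triDet p' q' r' = 1)
    (hw : triWeight d p q r = triWeight d p' q' r') :
    ∃ g : GMap, g.appNum d '' {p, q, r} = {p', q', r'} := by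
  have hT₂ : triDet q' r' p' = 1 := by rwa [← triDet_rotate]
  have hT₃ : triDet r' p' q' = 1 := by rwa [← triDet_rotate, ← triDet_rotate]
  have hV₂ : ({q', r', p'} : Set (ℤ × ℤ)) = {p', q', r'} := by
    ext; simp only [Set.mem_insert_iff, Set.mem_singleton_iff]; tauto
  have hV₃ : ({r', p', q'} : Set (ℤ × ℤ)) = {p', q', r'} := by
    ext; simp only [Set.mem_insert_iff, Set.mem_singleton_iff]; tauto
  rcases Multiset.triple_eq_triple_cases hw with
    ⟨h₁, -, h₃⟩ | ⟨h₁, -, h₃⟩ | ⟨h₁, -, h₃⟩ | ⟨h₁, -, h₃⟩ | ⟨h₁, -, h₃⟩ | ⟨h₁, -, h₃⟩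
  · exact exists_image_eq_of_segWeight_eq hS hT h₁ h₃
  · exact hV₂ ▸ exists_image_eq_of_segWeight_eq hS hT₂ h₁ h₃
  · exact hV₃ ▸ exists_image_eq_of_segWeight_eq hS hT₃ h₁ h₃
  · exact hV₂ ▸ exists_image_eq_of_segWeight_eq_reverse hS hT₂ h₃ h₁
  · exact exists_image_eq_of_segWeight_eq_reverse hS hT h₃ h₁
  · exact hV₃ ▸ exists_image_eq_of_segWeight_eq_reverse hS hT₃ h₃ h₁

end Weights

/-- two `d`-minimal triangles are `G`-equivalent iff their weight
multisets (of counterclockwise-oriented edges) agree. -/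
theorem G_equiv_iff_weight_eq (d : ℕ) (hd : 0 < d) (p q r p' q' r' : ℤ × ℤ)
    (hS : IsMinimalTriangle d (pt d p) (pt d q) (pt d r))
    (hT : IsMinimalTriangle d (pt d p') (pt d q') (pt d r'))
    (hccwS : ccwZ p q r) (hccwT : ccwZ p' q' r') :
    (∃ g : GMap,
        g.app '' convexHull ℝ ({pt d p, pt d q, pt d r} : Set (ℝ × ℝ))
          = convexHull ℝ ({pt d p', pt d q', pt d r'} : Set (ℝ × ℝ))) ↔
      triWeight d p q r = triWeight d p' q' r' := by
  obtain ⟨-, -, -, -, hSmin⟩ := hS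
  obtain ⟨-, -, -, -, hTmin⟩ := hT
  have hS₁ := triDet_eq_one_of_minimal hd.ne' hSmin hccwS
  have hT₁ := triDet_eq_one_of_minimal hd.ne' hTmin hccwT
  have hpt : ∀ x y z : ℤ × ℤ, ({pt d x, pt d y, pt d z} : Set (ℝ × ℝ)) = pt d '' {x, y, z} := by
    simp [Set.image_insert_eq]
  simp only [hpt] at hSmin hTmin ⊢
  simp only [GMap.image_convexHull_eq_iff _ hd.ne' hSmin hTmin]
  exact ⟨fun ⟨g, hg⟩ => triWeight_eq_of_image_eq g hccwS hccwT hg,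
    exists_image_eq_of_triWeight_eq hS₁ hT₁⟩
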